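/- arXiv:2305.17591 — 3 statements merged into one kernel-verified Lean document; each statement's English description precedes it below -/
import Mathlib

section
/- Let R be a Noetherian local ring of prime characteristic p, let M and N be R-modules with an injective R-linear map ι : M → N (where N is viewed as an R-module via restriction of scalars along the e-th Frobenius, i.e., r acts as r^{p^e}), and suppose x₁,…,x_t ∈ R is a sequence such that x₁^{p^e},…,x_t^{p^e} is a regular sequence on N (as an honest R-module). If for each i the induced map M/(x₁,…,x_i)M → N/(x₁^{p^e},…,x_i^{p^e})N is injective, then x₁,…,x_t is a regular sequence on M. -/
/-- Let `R` be a Noetherian local ring of prime characteristic `p`, and let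
`ι : M → N` be an injective additive map which is `p^e`-semilinear (i.e. `ι (r • m) = r^{p^e} • ι m`,
so that `ι` is an `R`-linear map `M → F^e_* N`).  Suppose `x₁^{p^e}, …, x_t^{p^e}` is a regular
sequence on `N`, and that for each `i` the induced map
`M/(x₁,…,x_i)M → N/(x₁^{p^e},…,x_i^{p^e})N` is injective.  Then `x₁, …, x_t` is a regular
sequence on `M`. -/
theorem stmt1 {R : Type*} [CommRing R] [IsNoetherianRing R] [IsLocalRing R]
    (p : ℕ) [Fact p.Prime] [CharP R p] (e : ℕ)
    {M N : Type*} [AddCommGroup M] [Module R M] [AddCommGroup N] [Module R N]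
    (ι : M →+ N) (hsemilinear : ∀ (r : R) (m : M), ι (r • m) = r ^ p ^ e • ι m)
    (hinj : Function.Injective ι)
    (xs : List R)
    (hreg : RingTheory.Sequence.IsWeaklyRegular N (xs.map (· ^ p ^ e)))
    (hquot : ∀ i ≤ xs.length, ∀ m : M,
      ι m ∈ Ideal.span {a | a ∈ (xs.take i).map (· ^ p ^ e)} • (⊤ : Submodule R N) →
        m ∈ Ideal.span {a | a ∈ xs.take i} • (⊤ : Submodule R M)) :
    RingTheory.Sequence.IsWeaklyRegular M xs := by
  have hφ : ∀ r : R, (r : R) ^ p ^ e = iterateFrobenius R p e r := fun r => rfl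
  -- `ι` maps `I • ⊤` into `(I.map φ) • ⊤`, where `φ = iterateFrobenius`.
  have key : ∀ (I : Ideal R) (m : M), m ∈ I • (⊤ : Submodule R M) →
      ι m ∈ (I.map (iterateFrobenius R p e)) • (⊤ : Submodule R N) := by
    intro I m hm
    refine Submodule.smul_induction_on hm ?_ ?_
    · intro r hr n _
      rw [hsemilinear, hφ]
      exact Submodule.smul_mem_smul (Ideal.mem_map_of_mem _ hr) trivial
    · intro a b ha hb
      rw [map_add]
      exact add_mem ha hb
  refine ⟨fun i hi => ?_⟩
  -- reduce to a statement about representatives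
  set I : Ideal R := Ideal.span {a | a ∈ xs.take i} with hI
  have main : ∀ m : M, xs[i] • m ∈ I • (⊤ : Submodule R M) →
      m ∈ I • (⊤ : Submodule R M) := by
    intro m hm
    have hiN : i < (xs.map (· ^ p ^ e)).length := by simpa using hi
    have regN := hreg.regular_mod_prev i hiN
    -- translate the ideal on the N side
    have hJ : Ideal.span {a | a ∈ ((xs.map (· ^ p ^ e)).take i)} =
        I.map (iterateFrobenius R p e) := by
      rw [hI, ← List.map_take, Ideal.map_ofList]
      rfl
    have h1 : ι (xs[i] • m) ∈ (I.map (iterateFrobenius R p e)) • (⊤ : Submodule R N) :=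
      key I _ hm
    rw [hsemilinear] at h1
    -- use regularity of xs[i]^{p^e} on N / J
    have h2 : (xs.map (· ^ p ^ e))[i] •
        (Submodule.Quotient.mk (ι m) :
          N ⧸ (Ideal.span {a | a ∈ ((xs.map (· ^ p ^ e)).take i)} • (⊤ : Submodule R N))) = 0 := by
      rw [← Submodule.Quotient.mk_smul, Submodule.Quotient.mk_eq_zero]
      have : (xs.map (· ^ p ^ e))[i] = xs[i] ^ p ^ e := by
        simp
      rw [this, hJ]
      exact h1
    have h3 : (Submodule.Quotient.mk (ι m) :
        N ⧸ (Ideal.span {a | a ∈ ((xs.map (· ^ p ^ e)).take i)} • (⊤ : Submodule R N))) = 0 := by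
      apply regN
      dsimp only
      rw [h2, smul_zero]
    rw [Submodule.Quotient.mk_eq_zero, hJ] at h3
    have h4 : ι m ∈ Ideal.span {a | a ∈ (xs.take i).map (· ^ p ^ e)} • (⊤ : Submodule R N) := by
      have : Ideal.span {a | a ∈ (xs.take i).map (· ^ p ^ e)} =
          I.map (iterateFrobenius R p e) := by
        rw [hI, Ideal.map_ofList]; rfl
      rw [this]; exact h3
    exact hquot i (le_of_lt hi) m h4
  -- now prove IsSMulRegular on the quotient
  intro a b hab
  obtain ⟨a, rfl⟩ := Submodule.Quotient.mk_surjective _ a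
  obtain ⟨b, rfl⟩ := Submodule.Quotient.mk_surjective _ b
  dsimp only at hab
  rw [← Submodule.Quotient.mk_smul, ← Submodule.Quotient.mk_smul,
    Submodule.Quotient.eq] at hab
  rw [Submodule.Quotient.eq]
  rw [← smul_sub] at hab
  exact main _ hab
end

section
/- Let (R, m, k) be a Noetherian local ring, and let M be an R-module and φ : R → M an R-linear map. Then φ is a pure map of R-modules if and only if the induced map E_R(k) → E_R(k) ⊗_R M is injective, where E_R(k) is an injective hull of the residue field k. -/
open IsLocalRing TensorProduct

universe u

theorem exists_sep_map {R : Type u} [CommRing R] [IsLocalRing R]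
    {E : Type u} [AddCommGroup E] [Module R E] [Module.Injective R E]
    (ι : ResidueField R →ₗ[R] E) (hι : Function.Injective ι)
    {P : Type u} [AddCommGroup P] [Module R P] (p : P) (hp : p ≠ 0) :
    ∃ h : P →ₗ[R] E, h p ≠ 0 := by
  set I : Ideal R := LinearMap.ker (LinearMap.toSpanSingleton R P p) with hI
  have hIm : I ≤ maximalIdeal R := by
    intro r hr
    by_contra hr'
    have hu : IsUnit r := IsLocalRing.notMem_maximalIdeal.mp hr'
    have h0 : r • p = 0 := hr
    exact hp (hu.smul_eq_zero.mp h0)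
  set f₀ : R →ₗ[R] E := ι ∘ₗ (Submodule.mkQ (maximalIdeal R)) with hf₀
  have hIf : I ≤ LinearMap.ker f₀ := by
    intro r hr
    have h0 : (Submodule.mkQ (maximalIdeal R)) r = 0 := by
      rw [Submodule.mkQ_apply, Submodule.Quotient.mk_eq_zero]
      exact hIm hr
    rw [hf₀, LinearMap.mem_ker]
    exact (congrArg ι h0).trans (map_zero ι)
  set g : (R ⧸ I) →ₗ[R] E := Submodule.liftQ I f₀ hIf with hg
  set inj : (R ⧸ I) →ₗ[R] P := Submodule.liftQ I (LinearMap.toSpanSingleton R P p) le_rfl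
    with hinj
  have hinjinj : Function.Injective inj := by
    rw [← LinearMap.ker_eq_bot, hinj]
    exact Submodule.ker_liftQ_eq_bot I _ le_rfl le_rfl
  obtain ⟨h, hh⟩ := Module.Injective.out inj hinjinj g
  refine ⟨h, ?_⟩
  have hp1 : inj (Submodule.Quotient.mk (1 : R)) = p := by
    rw [hinj, Submodule.liftQ_apply, LinearMap.toSpanSingleton_apply, one_smul]
  rw [← hp1, hh]
  have hg1 : g (Submodule.Quotient.mk (1 : R)) = ι (Submodule.mkQ (maximalIdeal R) 1) := by
    rw [hg, Submodule.liftQ_apply, hf₀]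
    rfl
  rw [hg1]
  intro h0
  have h1 : (Submodule.mkQ (maximalIdeal R) (1 : R)) = 0 := by
    apply hι
    rw [h0]; exact (map_zero ι).symm
  rw [Submodule.mkQ_apply, Submodule.Quotient.mk_eq_zero] at h1
  exact (IsLocalRing.maximalIdeal.isMaximal R).ne_top
    (Ideal.eq_top_of_unit_mem _ _ 1 h1 (mul_one 1))

/-- Let `(R, m, k)` be a Noetherian local ring, `M` an `R`-module and
`φ : R → M` an `R`-linear map.  Then `φ` is pure (i.e. `φ ⊗ id_P` is injective for every
`R`-module `P`) if and only if the induced map `E_R(k) → E_R(k) ⊗_R M` is injective, where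
`E_R(k)` is an injective hull of the residue field `k`. -/
theorem stmt4 {R : Type u} [CommRing R] [IsNoetherianRing R] [IsLocalRing R]
    {M : Type u} [AddCommGroup M] [Module R M]
    {E : Type u} [AddCommGroup E] [Module R E] [Module.Injective R E]
    (ι : ResidueField R →ₗ[R] E) (hι : Function.Injective ι)
    (hess : ∀ S : Submodule R E, S ≠ ⊥ → S ⊓ LinearMap.range ι ≠ ⊥)
    (φ : R →ₗ[R] M) :
    (∀ (P : Type u) [AddCommGroup P] [Module R P],
        Function.Injective (LinearMap.rTensor P φ))
      ↔ Function.Injective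
          ((LinearMap.lTensor E φ) ∘ₗ (TensorProduct.rid R E).symm.toLinearMap) := by
  set J : E →ₗ[R] E ⊗[R] M :=
    (LinearMap.lTensor E φ) ∘ₗ (TensorProduct.rid R E).symm.toLinearMap with hJ
  have hJapp : ∀ e : E, J e = e ⊗ₜ[R] φ 1 := by
    intro e; simp [hJ, TensorProduct.rid_symm_apply]
  constructor
  · intro hpure
    have h1 : Function.Injective (LinearMap.rTensor E φ) := hpure E
    rw [← LinearMap.ker_eq_bot]
    rw [Submodule.eq_bot_iff]
    intro e he
    rw [LinearMap.mem_ker] at he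
    rw [hJapp] at he
    have h2 : (TensorProduct.comm R E M) (e ⊗ₜ[R] φ 1) = φ 1 ⊗ₜ[R] e := rfl
    have h3 : LinearMap.rTensor E φ ((1 : R) ⊗ₜ[R] e) = 0 := by
      simp only [LinearMap.rTensor_tmul]
      rw [← h2, he, map_zero]
    have h4 : (1 : R) ⊗ₜ[R] e = 0 := by
      apply h1; simpa using h3
    have := congrArg (TensorProduct.lid R E) h4
    simpa using this
  · intro hinj P _ _
    obtain ⟨r, hr⟩ := Module.Injective.out J hinj (LinearMap.id : E →ₗ[R] E)
    -- r : E ⊗ M → E retracting J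
    set m₀ : M := φ 1 with hm₀
    have hfact : LinearMap.rTensor P φ =
        (TensorProduct.mk R M P m₀) ∘ₗ (TensorProduct.lid R P).toLinearMap := by
      apply TensorProduct.ext'
      intro x p
      have hx : φ x = x • φ 1 := by rw [← map_smul, smul_eq_mul, mul_one]
      simp only [LinearMap.rTensor_tmul, LinearMap.coe_comp, Function.comp_apply,
        LinearEquiv.coe_coe, TensorProduct.lid_tmul, TensorProduct.mk_apply, hm₀, hx]
      rw [TensorProduct.smul_tmul]
    rw [hfact, LinearMap.coe_comp, LinearEquiv.coe_coe]
    apply Function.Injective.comp ?_ (TensorProduct.lid R P).injective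
    rw [← LinearMap.ker_eq_bot, Submodule.eq_bot_iff]
    intro p hp
    rw [LinearMap.mem_ker, TensorProduct.mk_apply] at hp
    by_contra hp0
    obtain ⟨h, hh⟩ := exists_sep_map ι hι p hp0
    have h5 : (LinearMap.lTensor M h) (m₀ ⊗ₜ[R] p) = m₀ ⊗ₜ[R] h p := rfl
    have h6 : m₀ ⊗ₜ[R] h p = 0 := by rw [← h5, hp, map_zero]
    have h7 : (h p : E) ⊗ₜ[R] m₀ = 0 := by
      have := congrArg (TensorProduct.comm R M E) h6
      simpa using this
    have h8 : J (h p) = 0 := by rw [hJapp]; exact h7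
    have := hr (h p)
    rw [h8, map_zero] at this
    exact hh this.symm
end

section
/- Let R = F_p[[x,y,z]] (p prime). Then for every e ≥ 1, the element (x + y^p + z^p)^{p^{e−1}} · x^{p^e − 1} lies in the Frobenius power m^{[p^e]} = (x^{p^e}, y^{p^e}, z^{p^e}). Consequently, by Fedder's criterion, the pair (R, (1/p)·div(x + y^p + z^p) + div(x)) is not sharply F-pure. -/
open MvPowerSeries

/-- Let `R = F_p[[x,y,z]]`.  For every `e ≥ 1`, the element
`(x + y^p + z^p)^{p^{e−1}} · x^{p^e − 1}` lies in the Frobenius power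
`m^{[p^e]} = (x^{p^e}, y^{p^e}, z^{p^e})`.  (By Fedder's criterion this means the pair
`(R, (1/p)·div(x + y^p + z^p) + div(x))` is not sharply `F`-pure.) -/
theorem stmt8 (p : ℕ) [Fact p.Prime] (e : ℕ) (he : 1 ≤ e) :
    (X (0 : Fin 3) + X 1 ^ p + X 2 ^ p : MvPowerSeries (Fin 3) (ZMod p)) ^ p ^ (e - 1) *
        X 0 ^ (p ^ e - 1)
      ∈ Ideal.span {(X (0 : Fin 3) ^ p ^ e : MvPowerSeries (Fin 3) (ZMod p)),
          X 1 ^ p ^ e, X 2 ^ p ^ e} := by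
  haveI : CharP (MvPowerSeries (Fin 3) (ZMod p)) p :=
    charP_of_injective_ringHom
      (f := (C : ZMod p →+* MvPowerSeries (Fin 3) (ZMod p)))
      (fun a b h => by simpa using congrArg (constantCoeff : MvPowerSeries (Fin 3) (ZMod p) →+* ZMod p) h) p
  have hp : p.Prime := Fact.out
  have hpe : p * p ^ (e - 1) = p ^ e := by
    conv_rhs => rw [← Nat.sub_add_cancel he]
    rw [pow_succ, mul_comm]
  have key : (X (0 : Fin 3) + X 1 ^ p + X 2 ^ p : MvPowerSeries (Fin 3) (ZMod p)) ^ p ^ (e - 1)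
      = X 0 ^ p ^ (e - 1) + X 1 ^ p ^ e + X 2 ^ p ^ e := by
    rw [add_pow_char_pow, add_pow_char_pow, ← pow_mul, ← pow_mul, hpe]
  rw [key]
  have h0 : (X (0 : Fin 3) ^ p ^ e : MvPowerSeries (Fin 3) (ZMod p)) ∈
      Ideal.span {(X (0 : Fin 3) ^ p ^ e : MvPowerSeries (Fin 3) (ZMod p)), X 1 ^ p ^ e,
        X 2 ^ p ^ e} := Ideal.subset_span (by simp)
  have h1 : (X (1 : Fin 3) ^ p ^ e : MvPowerSeries (Fin 3) (ZMod p)) ∈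
      Ideal.span {(X (0 : Fin 3) ^ p ^ e : MvPowerSeries (Fin 3) (ZMod p)), X 1 ^ p ^ e,
        X 2 ^ p ^ e} := Ideal.subset_span (by simp)
  have h2 : (X (2 : Fin 3) ^ p ^ e : MvPowerSeries (Fin 3) (ZMod p)) ∈
      Ideal.span {(X (0 : Fin 3) ^ p ^ e : MvPowerSeries (Fin 3) (ZMod p)), X 1 ^ p ^ e,
        X 2 ^ p ^ e} := Ideal.subset_span (by simp)
  have hxx : (X (0 : Fin 3) : MvPowerSeries (Fin 3) (ZMod p)) ^ p ^ (e - 1) * X 0 ^ (p ^ e - 1)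
      = X 0 ^ p ^ e * X 0 ^ (p ^ (e - 1) - 1) := by
    rw [← pow_add, ← pow_add]
    congr 1
    have h1le : 1 ≤ p ^ (e - 1) := Nat.one_le_pow _ _ hp.pos
    have h1le' : 1 ≤ p ^ e := Nat.one_le_pow _ _ hp.pos
    omega
  rw [add_mul, add_mul, hxx]
  exact Ideal.add_mem _ (Ideal.add_mem _ (Ideal.mul_mem_right _ _ h0)
    (Ideal.mul_mem_right _ _ h1)) (Ideal.mul_mem_right _ _ h2)
end
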